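/- arXiv:1007.3815 — 4 statements merged into one kernel-verified Lean document; each statement's English description precedes it below -/
import Mathlib

section
/- For any real L > 1 and any point x ∈ ℝ^{Nd}, there exist an integer K with K ≤ N^N and points x^{(1)}, …, x^{(K)} ∈ ℝ^{Nd} such that: for every lattice point y ∈ ℤ^{Nd} lying outside the union ∪_{l=1}^{K} Λ_{2N(L+r₁)}(x^{(l)}) and satisfying dist(Λ_L(x), Λ_L(y)) > 2N(L+r₁), the pair of cubes Λ_L(x), Λ_L(y) is separable. -/
/-!
Call `dist(y_a, x) = min_i dist(y_a, x_i)` the distance of the coordinate `y_a` from the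
configuration `x`, and let `J_k` be the set of coordinates at distance at least `2k(L + r₁)`.
If `y` avoids the `N^N` cubes of radius `2N(L + r₁)` centred at the points `(x_{τ(1)}, …, x_{τ(N)})`,
then some coordinate of `y` lies in `J_N`. The chain `J_0 ⊇ J_1 ⊇ ⋯ ⊇ J_N` has `N + 1` terms,
the first of size at most `N` and the last nonempty, so it stalls: `J_k = J_{k+1}` for some `k < N`.
Every coordinate in `J_{k+1}` is then `2(L + r₁)`-far from `x` and from every coordinate outside
`J_k = J_{k+1}`, which makes `Λ_L(y)` `J_{k+1}`-separable from `Λ_L(x)`.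
-/

open Set Metric

/-- The open cube (max-norm ball) of radius `L` centered at `u` in `ℝ^{Nd} ≅ (ℝ^d)^N`,
equipped with the max-norm (the sup-norm on the Pi type). -/
def cube {N d : ℕ} (L : ℝ) (u : Fin N → Fin d → ℝ) : Set (Fin N → Fin d → ℝ) :=
  Metric.ball u L

/-- `Λ_L(y)` is `J`-separable from `Λ_L(x)`:
`(∪_{j∈J} Π_j Λ_{L+r₁}(y)) ∩ [(∪_{i∉J} Π_i Λ_{L+r₁}(y)) ∪ (∪_{i=1}^N Π_i Λ_{L+r₁}(x))] = ∅`. -/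
def JSeparable {N d : ℕ} (r₁ L : ℝ) (J : Finset (Fin N))
    (x y : Fin N → Fin d → ℝ) : Prop :=
  (⋃ j ∈ J, (fun z : Fin N → Fin d → ℝ => z j) '' cube (L + r₁) y) ∩
    ((⋃ i ∈ (J : Set (Fin N))ᶜ, (fun z : Fin N → Fin d → ℝ => z i) '' cube (L + r₁) y) ∪
      ⋃ i : Fin N, (fun z : Fin N → Fin d → ℝ => z i) '' cube (L + r₁) x) = ∅

/-- A pair of cubes `Λ_L(x)`, `Λ_L(y)` is separable if for some nonempty `J ⊆ {1,…,N}`,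
either `Λ_L(y)` is `J`-separable from `Λ_L(x)` or `Λ_L(x)` is `J`-separable from `Λ_L(y)`. -/
def SeparablePair {N d : ℕ} (r₁ L : ℝ) (x y : Fin N → Fin d → ℝ) : Prop :=
  ∃ J : Finset (Fin N), J.Nonempty ∧ (JSeparable r₁ L J x y ∨ JSeparable r₁ L J y x)

/-- The distance between two subsets of `ℝ^{Nd}` (infimum of pairwise distances). -/
noncomputable def setDist {N d : ℕ} (A B : Set (Fin N → Fin d → ℝ)) : ℝ :=
  sInf (Set.image2 dist A B)

theorem Finset.exists_lt_eq_succ_of_antitone {α : Type*} {s : ℕ → Finset α} (hs : Antitone s)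
    {n : ℕ} (hcard : (s 0).card ≤ n) (hn : (s n).Nonempty) : ∃ k < n, s k = s (k + 1) := by
  by_contra! hne
  have hdecr : ∀ k ≤ n, (s k).card + k ≤ (s 0).card := by
    intro k hk
    induction k with
    | zero => simp
    | succ k ih =>
      have hlt : (s (k + 1)).card < (s k).card :=
        Finset.card_lt_card <| (hs k.le_succ).lt_of_ne fun h => hne k (by omega) h.symm
      have := ih (by omega)
      omega
  have := hdecr n le_rfl
  have := hn.card_pos
  omega

theorem exists_far_of_notMem_iUnion_ball {ι κ X : Type*} [Fintype ι] [PseudoMetricSpace X]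
    {R : ℝ} (hR : 0 < R) (x : κ → X) {y : ι → X} (hy : y ∉ ⋃ τ : ι → κ, ball (x ∘ τ) R) :
    ∃ n, ∀ i, R ≤ dist (y n) (x i) := by
  by_contra! hclose
  choose τ hτ using hclose
  exact hy <| mem_iUnion.2 ⟨τ, (dist_pi_lt_iff hR).2 fun n => by simpa [dist_comm] using hτ n⟩

theorem exists_nonempty_finset_far_from_compl {ι κ X : Type*} [Fintype ι] [PseudoMetricSpace X]
    (y : ι → X) (x : κ → X) {δ : ℝ} (hδ : 0 ≤ δ) {n₀ : ι}
    (hn₀ : ∀ i, Fintype.card ι * δ ≤ dist (y n₀) (x i)) :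
    ∃ J : Finset ι, J.Nonempty ∧
      ∀ j ∈ J, (∀ b ∉ J, δ ≤ dist (y j) (y b)) ∧ ∀ i, δ ≤ dist (y j) (x i) := by
  classical
  set J : ℕ → Finset ι := fun k => {a | ∀ i, k * δ ≤ dist (y a) (x i)}
  have mem_J {k : ℕ} {a : ι} : a ∈ J k ↔ ∀ i, k * δ ≤ dist (y a) (x i) := by simp [J]
  have hJ : Antitone J := fun m k hmk a ha => mem_J.2 fun i =>
    (mul_le_mul_of_nonneg_right (by exact_mod_cast hmk) hδ).trans (mem_J.1 ha i)
  obtain ⟨k, hk, hstall⟩ := Finset.exists_lt_eq_succ_of_antitone hJ (Finset.card_le_univ _)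
    ⟨n₀, mem_J.2 hn₀⟩
  refine ⟨J (k + 1), ⟨n₀, hJ hk (mem_J.2 hn₀)⟩, fun j hj => ⟨fun b hb => ?_, fun i => ?_⟩⟩
  · rw [← hstall, mem_J] at hb
    obtain ⟨i, hbi⟩ := not_forall.1 hb
    have hji := mem_J.1 hj i
    push_cast at hji
    linarith [not_le.1 hbi, dist_triangle (y j) (y b) (x i)]
  · have hji := mem_J.1 hj i
    push_cast at hji
    linarith [mul_nonneg k.cast_nonneg hδ]

theorem dist_lt_of_mem_image_eval_cube {N d : ℕ} {r : ℝ} {u : Fin N → Fin d → ℝ} {i : Fin N}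
    {p : Fin d → ℝ} (hp : p ∈ (fun z : Fin N → Fin d → ℝ => z i) '' cube r u) :
    dist p (u i) < r := by
  obtain ⟨z, hz, rfl⟩ := hp
  exact (dist_le_pi_dist z u i).trans_lt hz

theorem jSeparable_of_le_dist {N d : ℕ} {r₁ L : ℝ} {J : Finset (Fin N)}
    {x y : Fin N → Fin d → ℝ}
    (hfar : ∀ j ∈ J, (∀ b ∉ J, 2 * (L + r₁) ≤ dist (y j) (y b)) ∧
      ∀ i, 2 * (L + r₁) ≤ dist (y j) (x i)) :
    JSeparable r₁ L J x y := by
  rw [JSeparable, eq_empty_iff_forall_notMem]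
  rintro p ⟨hp, hp' | hp'⟩ <;> simp only [mem_iUnion] at hp hp' <;> obtain ⟨j, hj, hpj⟩ := hp
  · obtain ⟨b, hb, hpb⟩ := hp'
    linarith [(hfar j hj).1 b hb, dist_triangle_left (y j) (y b) p,
      dist_lt_of_mem_image_eval_cube hpj, dist_lt_of_mem_image_eval_cube hpb]
  · obtain ⟨i, hpi⟩ := hp'
    linarith [(hfar j hj).2 i, dist_triangle_left (y j) (x i) p,
      dist_lt_of_mem_image_eval_cube hpj, dist_lt_of_mem_image_eval_cube hpi]

theorem separability_covering_general (N d : ℕ) (hN : 1 ≤ N)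
    (r₁ : ℝ) (hr₁ : 0 ≤ r₁) (L : ℝ) (hL : 1 < L) (x : Fin N → Fin d → ℝ) :
    ∃ (K : ℕ), K ≤ N ^ N ∧ ∃ xc : Fin K → (Fin N → Fin d → ℝ),
      ∀ y : Fin N → Fin d → ℤ,
        (fun n i => (y n i : ℝ)) ∉ (⋃ l : Fin K, cube (2 * N * (L + r₁)) (xc l)) →
        setDist (cube L x) (cube L (fun n i => (y n i : ℝ))) > 2 * N * (L + r₁) →
        SeparablePair r₁ L x (fun n i => (y n i : ℝ)) := by
  have hr : 0 < L + r₁ := by linarith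
  have hN' : (0 : ℝ) < N := by exact_mod_cast hN
  let e : Fin (N ^ N) ≃ (Fin N → Fin N) := Fintype.equivOfCardEq (by simp)
  refine ⟨N ^ N, le_rfl, fun l => x ∘ e l, fun y hy _ => ?_⟩
  rw [e.surjective.iUnion_comp fun τ => cube (2 * N * (L + r₁)) (x ∘ τ)] at hy
  obtain ⟨n₀, hn₀⟩ := exists_far_of_notMem_iUnion_ball (by positivity) x hy
  obtain ⟨J, hJ, hfar⟩ := exists_nonempty_finset_far_from_compl (fun n i => (y n i : ℝ)) x
    (by positivity : 0 ≤ 2 * (L + r₁)) fun i => by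
      simpa [mul_left_comm, mul_assoc] using hn₀ i
  exact ⟨J, hJ, Or.inl (jSeparable_of_le_dist hfar)⟩

/-- For any `L > 1` and any `x ∈ ℝ^{Nd}`, there are `K ≤ N^N` points
`x^{(1)}, …, x^{(K)}` such that any lattice point `y` outside
`∪_l Λ_{2N(L+r₁)}(x^{(l)})` with `dist(Λ_L(x), Λ_L(y)) > 2N(L+r₁)` gives a
separable pair of cubes `Λ_L(x)`, `Λ_L(y)`. -/
theorem separability_covering (N d : ℕ) (hN : 1 ≤ N) (hd : 1 ≤ d)
    (r₁ : ℝ) (hr₁ : 0 ≤ r₁) (L : ℝ) (hL : 1 < L) (x : Fin N → Fin d → ℝ) :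
    ∃ (K : ℕ), K ≤ N ^ N ∧ ∃ xc : Fin K → (Fin N → Fin d → ℝ),
      ∀ y : Fin N → Fin d → ℤ,
        (fun n i => (y n i : ℝ)) ∉ (⋃ l : Fin K, cube (2 * N * (L + r₁)) (xc l)) →
        setDist (cube L x) (cube L (fun n i => (y n i : ℝ))) > 2 * N * (L + r₁) →
        SeparablePair r₁ L x (fun n i => (y n i : ℝ)) :=
  separability_covering_general N d hN r₁ hr₁ L hL x
end

section
/- Assume N ≥ 2 and L ≥ max(r₁, 1). For every x ∈ ℝ^{Nd} and every lattice point y ∈ ℤ^{Nd} with |y| > |x| + 5NL, the pair of cubes Λ_L(x), Λ_L(y) is separable; in particular, any pair of cubes Λ_L(0), Λ_L(y) with y ∈ ℤ^{Nd} and |y| > 5NL is separable. -/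
open Set Metric

/-! Put `ρ = L + r₁` and `s = 4L ≥ 2ρ`. Some coordinate of `y` has norm at least `‖x‖ + N s`,
so the other `N - 1` coordinate norms leave one of the `N` windows
`[‖x‖ + k s, ‖x‖ + (k + 1) s)`, `k < N`, empty. Let `J` be the set of coordinates whose norm lies
above that window: the balls of radius `ρ` around `y_j`, `j ∈ J`, are then `s`-far in norm from
those around `y_i`, `i ∉ J`, and from those around all `x_i`, hence disjoint from them. -/

open scoped Finset

theorem Metric.image_eval_ball {ι : Type*} [Fintype ι] {X : ι → Type*}
    [∀ i, PseudoMetricSpace (X i)] (u : ∀ i, X i) (R : ℝ) (i : ι) :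
    (fun z : ∀ i, X i => z i) '' ball u R = ball (u i) R := by
  rcases le_or_gt R 0 with hR | hR
  · simp [ball_eq_empty.2 hR]
  · rw [ball_pi u hR, eval_image_univ_pi]
    exact univ_pi_nonempty_iff.2 fun j => nonempty_ball.2 hR

theorem exists_Ico_disjoint_range {ι : Type*} [Fintype ι] (f : ι → ℝ)
    {a s : ℝ} (hs : 0 < s) {j₀ : ι} (hj₀ : a + Fintype.card ι * s ≤ f j₀) :
    ∃ T, a ≤ T ∧ T + s ≤ f j₀ ∧ Disjoint (Set.Ico T (T + s)) (range f) := by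
  classical
  set bucket : ι → ℤ := fun j => ⌊(f j - a) / s⌋
  have hcard :
      #((Finset.univ.erase j₀).image bucket) < #(Finset.Ico (0 : ℤ) (Fintype.card ι)) := by
    calc #((Finset.univ.erase j₀).image bucket) ≤ #(Finset.univ.erase j₀) := Finset.card_image_le
      _ < Fintype.card ι := Finset.card_erase_lt_of_mem (Finset.mem_univ j₀)
      _ = #(Finset.Ico (0 : ℤ) (Fintype.card ι)) := by simp
  obtain ⟨k, hk, hk_free⟩ := Finset.exists_mem_notMem_of_card_lt_card hcard
  obtain ⟨hk₀, hkN⟩ := Finset.mem_Ico.1 hk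
  have hk₀' : (0 : ℝ) ≤ k := by exact_mod_cast hk₀
  have hkN' : (k : ℝ) + 1 ≤ Fintype.card ι := by exact_mod_cast Int.add_one_le_of_lt hkN
  refine ⟨a + s * k, by nlinarith, by nlinarith, Set.disjoint_right.2 ?_⟩
  rintro _ ⟨j, rfl⟩ hj
  have hbucket : bucket j = k := by
    rw [Int.floor_eq_iff, le_div_iff₀ hs, div_lt_iff₀ hs]
    constructor <;> linarith [hj.1, hj.2]
  refine hk_free (Finset.mem_image.2 ⟨j, Finset.mem_erase.2 ⟨?_, Finset.mem_univ j⟩, hbucket⟩)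
  rintro rfl
  nlinarith [hj.2]

section Separability

variable {N d : ℕ} {r₁ L : ℝ}

theorem jSeparable_iff_disjoint (J : Finset (Fin N)) (x y : Fin N → Fin d → ℝ) :
    JSeparable r₁ L J x y ↔
      (∀ j ∈ J, ∀ i ∉ J, Disjoint (ball (y j) (L + r₁)) (ball (y i) (L + r₁))) ∧
      ∀ j ∈ J, ∀ i, Disjoint (ball (y j) (L + r₁)) (ball (x i) (L + r₁)) := by
  simp only [JSeparable, cube, image_eval_ball,
    ← disjoint_iff_inter_eq_empty, disjoint_union_right, disjoint_iUnion₂_left,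
    disjoint_iUnion_right, mem_compl_iff, Finset.mem_coe]
  exact and_congr ⟨fun h j hj i hi => h i hi j hj, fun h i hi j hj => h j hj i hi⟩
    ⟨fun h j hj i => h i j hj, fun h i j hj => h j hj i⟩

theorem jSeparable_of_norm_gap {J : Finset (Fin N)} {x y : Fin N → Fin d → ℝ} {T : ℝ}
    (hxT : ‖x‖ ≤ T) (hJ : ∀ j ∈ J, T + 2 * (L + r₁) ≤ ‖y j‖) (hJc : ∀ i ∉ J, ‖y i‖ ≤ T) :
    JSeparable r₁ L J x y := by
  have gap : ∀ j ∈ J, ∀ {v : Fin d → ℝ}, ‖v‖ ≤ T →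
      Disjoint (ball (y j) (L + r₁)) (ball v (L + r₁)) := fun j hj v hv =>
    ball_disjoint_ball <| by linarith [hJ j hj, norm_sub_norm_le (y j) v, dist_eq_norm (y j) v]
  exact (jSeparable_iff_disjoint J x y).2
    ⟨fun j hj i hi => gap j hj (hJc i hi), fun j hj i => gap j hj ((norm_le_pi_norm x i).trans hxT)⟩

end Separability

theorem separablePair_of_norm_gt {N d : ℕ} {r₁ L s : ℝ} (hs : 0 < s) (hρ : 2 * (L + r₁) ≤ s)
    {x y : Fin N → Fin d → ℝ} (h : ‖x‖ + N * s < ‖y‖) : SeparablePair r₁ L x y := by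
  classical
  obtain ⟨j₀, hj₀⟩ : ∃ j₀, ‖x‖ + N * s ≤ ‖y j₀‖ := by
    by_contra! hcon
    exact h.not_ge ((pi_norm_le_iff_of_nonneg (by positivity)).2 fun j => (hcon j).le)
  obtain ⟨T, hxT, hTj₀, hT⟩ :=
    exists_Ico_disjoint_range (fun j => ‖y j‖) hs (by simpa using hj₀)
  refine ⟨Finset.univ.filter fun j => T + s ≤ ‖y j‖, ⟨j₀, by simpa using hTj₀⟩,
    Or.inl (jSeparable_of_norm_gap hxT (fun j hj => ?_) (fun i hi => ?_))⟩
  · linarith [(Finset.mem_filter.1 hj).2]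
  · by_contra! hTi
    exact Set.disjoint_left.1 hT ⟨hTi.le, by simpa using hi⟩ ⟨i, rfl⟩

theorem separable_of_far_5NL_general (N d : ℕ)
    (r₁ : ℝ) (L : ℝ) (hL : max r₁ 1 ≤ L) :
    (∀ (x : Fin N → Fin d → ℝ) (y : Fin N → Fin d → ℤ),
      ‖(fun n i => (y n i : ℝ) : Fin N → Fin d → ℝ)‖ > ‖x‖ + 5 * N * L →
      SeparablePair r₁ L x (fun n i => (y n i : ℝ))) ∧
    (∀ y : Fin N → Fin d → ℤ,
      ‖(fun n i => (y n i : ℝ) : Fin N → Fin d → ℝ)‖ > 5 * N * L →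
      SeparablePair r₁ L (0 : Fin N → Fin d → ℝ) (fun n i => (y n i : ℝ))) := by
  obtain ⟨hr₁L, hL₁⟩ := max_le_iff.1 hL
  have far : ∀ {x y : Fin N → Fin d → ℝ}, ‖y‖ > ‖x‖ + 5 * N * L → SeparablePair r₁ L x y :=
    fun h => separablePair_of_norm_gt (s := 4 * L) (by linarith) (by linarith) <| by
      have : (N : ℝ) * (4 * L) ≤ 5 * N * L := by nlinarith [N.cast_nonneg (α := ℝ)]
      linarith
  exact ⟨fun x y h => far h, fun y h => far (by simpa using h)⟩

/-- Assume `N ≥ 2` and `L ≥ max(r₁, 1)`. For every `x ∈ ℝ^{Nd}` and every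
lattice point `y ∈ ℤ^{Nd}` with `|y| > |x| + 5NL`, the pair of cubes
`Λ_L(x)`, `Λ_L(y)` is separable; in particular, any pair of cubes
`Λ_L(0)`, `Λ_L(y)` with `y ∈ ℤ^{Nd}` and `|y| > 5NL` is separable. -/
theorem separable_of_far_5NL (N d : ℕ) (hN : 2 ≤ N) (hd : 1 ≤ d)
    (r₁ : ℝ) (hr₁ : 0 ≤ r₁) (L : ℝ) (hL : max r₁ 1 ≤ L) :
    (∀ (x : Fin N → Fin d → ℝ) (y : Fin N → Fin d → ℤ),
      ‖(fun n i => (y n i : ℝ) : Fin N → Fin d → ℝ)‖ > ‖x‖ + 5 * N * L →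
      SeparablePair r₁ L x (fun n i => (y n i : ℝ))) ∧
    (∀ y : Fin N → Fin d → ℤ,
      ‖(fun n i => (y n i : ℝ) : Fin N → Fin d → ℝ)‖ > 5 * N * L →
      SeparablePair r₁ L (0 : Fin N → Fin d → ℝ) (fun n i => (y n i : ℝ))) :=
  separable_of_far_5NL_general N d r₁ L hL
end

section
/- For all integers k ≥ 0 and i ≥ 0, the scale sequence satisfies L_{k+i} ≥ L_k · ⌊L_k^{(3/2)^i − 1}⌋. -/
/-!
Each step of the recursion satisfies `L_k ^ (3/2) ≤ L_{k+1}`, and since `x ↦ x ^ (3/2)` is monotone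
on `[0, ∞)` this iterates to `L_k ^ ((3/2)^i) ≤ L_{k+i}`. The right-hand side of the claim is at most
`L_k · L_k ^ ((3/2)^i - 1) = L_k ^ ((3/2)^i)`.
-/

open scoped Real

/-- The scale sequence: `L_0 = L₀` and `L_k = ⌊L_{k-1}^{3/2}⌋ + 1` for `k ≥ 1`. -/
noncomputable def scale (L₀ : ℕ) : ℕ → ℕ
  | 0 => L₀
  | k + 1 => ⌊(scale L₀ k : ℝ) ^ (3 / 2 : ℝ)⌋₊ + 1

theorem rpow_pow_le_of_rpow_le_succ {u : ℕ → ℝ} {p : ℝ} (hu : ∀ n, 0 ≤ u n) (hp : 0 ≤ p)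
    (hstep : ∀ n, u n ^ p ≤ u (n + 1)) (k i : ℕ) : u k ^ (p ^ i) ≤ u (k + i) := by
  induction i with
  | zero => simp
  | succ i ih =>
    calc u k ^ (p ^ (i + 1)) = (u k ^ (p ^ i)) ^ p := by rw [pow_succ, Real.rpow_mul (hu k)]
      _ ≤ u (k + i) ^ p := Real.rpow_le_rpow (Real.rpow_nonneg (hu k) _) ih hp
      _ ≤ u (k + i + 1) := hstep (k + i)

theorem mul_natFloor_rpow_sub_one_le_rpow {x : ℝ} (hx : 0 ≤ x) (y : ℝ) :
    x * ⌊x ^ (y - 1)⌋₊ ≤ x ^ y := by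
  rcases hx.eq_or_lt with rfl | hx
  · simpa using Real.rpow_nonneg le_rfl y
  calc x * ⌊x ^ (y - 1)⌋₊ ≤ x * x ^ (y - 1) :=
        mul_le_mul_of_nonneg_left (Nat.floor_le (Real.rpow_nonneg hx.le _)) hx.le
    _ = x ^ y := by rw [Real.rpow_sub_one hx.ne', mul_div_cancel₀ _ hx.ne']

theorem scale_rpow_le_scale_succ (L₀ k : ℕ) :
    (scale L₀ k : ℝ) ^ (3 / 2 : ℝ) ≤ scale L₀ (k + 1) := by
  rw [scale, Nat.cast_add_one]
  exact (Nat.lt_floor_add_one _).le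

theorem scale_growth_general (L₀ : ℕ) (k i : ℕ) :
    (scale L₀ (k + i) : ℝ) ≥
      (scale L₀ k : ℝ) * (⌊(scale L₀ k : ℝ) ^ ((3 / 2 : ℝ) ^ i - 1)⌋₊ : ℝ) :=
  (mul_natFloor_rpow_sub_one_le_rpow (Nat.cast_nonneg _) _).trans <|
    rpow_pow_le_of_rpow_le_succ (fun _ => Nat.cast_nonneg _) (by norm_num)
      (scale_rpow_le_scale_succ L₀) k i

/-- For all `k, i ≥ 0`, the scale sequence satisfies
`L_{k+i} ≥ L_k · ⌊L_k^{(3/2)^i − 1}⌋`. -/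
theorem scale_growth (L₀ : ℕ) (hL₀ : 2 ≤ L₀) (k i : ℕ) :
    (scale L₀ (k + i) : ℝ) ≥
      (scale L₀ k : ℝ) * (⌊(scale L₀ k : ℝ) ^ ((3 / 2 : ℝ) ^ i - 1)⌋₊ : ℝ) :=
  scale_growth_general L₀ k i
end

section
/- Let n ≥ 1, let (Φ_n)_{n∈S} be a countable orthonormal family in L²(ℝ^n), let P be the orthogonal projection onto the closed span of (Φ_n)_{n∈S} (so P Φ_n = Φ_n for all n), let A ⊆ ℝ^n be measurable, and suppose that ‖(1 − 1_A)Φ_n‖ ≤ 1/4 for every n ∈ S. Then the cardinality of S is at most 2 ∑_{i∈I} ⟨1_A P 1_A e_i, e_i⟩ for any Hilbert basis (e_i)_{i∈I} of L²(ℝ^n) (the sum taken in [0, ∞]). -/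
open MeasureTheory Set ContinuousLinearMap
open scoped ENNReal InnerProductSpace

/-!
With `K = P χ`, the trace term `⟪χ P χ eᵢ, eᵢ⟫` is `‖K eᵢ‖²`, and `K† Φₛ = χ P Φₛ = χ Φₛ`.
Expanding each `‖K† Φₛ‖²` by Parseval in the basis `e`, exchanging the two sums and applying
Bessel's inequality to the orthonormal family `Φ` gives `∑ₛ ‖χ Φₛ‖² ≤ ∑ᵢ ‖K eᵢ‖²`.
Finally `‖χ Φₛ‖ ≥ 1 - 1/4`, so every `s` contributes at least `1/2` on the left.
-/

theorem one_le_two_mul_norm_sq_of_norm_sub_le {G : Type*} [SeminormedAddCommGroup G] {x y : G}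
    (hx : ‖x‖ = 1) (hxy : ‖x - y‖ ≤ 1 / 4) : 1 ≤ 2 * ‖y‖ ^ 2 := by
  nlinarith [norm_sub_norm_le x y, norm_nonneg y]

section InnerProductSpace

variable {𝕜 E F : Type*} [RCLike 𝕜] [NormedAddCommGroup E] [InnerProductSpace 𝕜 E]
  [NormedAddCommGroup F] [InnerProductSpace 𝕜 F]

theorem Orthonormal.tsum_ofReal_norm_inner_sq_le {S : Type*} {v : S → E} (hv : Orthonormal 𝕜 v)
    (x : E) : ∑' s, ENNReal.ofReal (‖⟪v s, x⟫_𝕜‖ ^ 2) ≤ ENNReal.ofReal (‖x‖ ^ 2) := by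
  rw [← ENNReal.ofReal_tsum_of_nonneg (fun _ ↦ by positivity) (hv.inner_products_summable x)]
  exact ENNReal.ofReal_le_ofReal (hv.tsum_inner_products_le x)

theorem HilbertBasis.hasSum_norm_inner_sq {ι : Type*} (b : HilbertBasis ι 𝕜 E) (x : E) :
    HasSum (fun i ↦ ‖⟪b i, x⟫_𝕜‖ ^ 2) (‖x‖ ^ 2) := by
  have h := (b.hasSum_inner_mul_inner x x).mapL (RCLike.reCLM (K := 𝕜))
  have hterm : ∀ i, RCLike.re (⟪x, b i⟫_𝕜 * ⟪b i, x⟫_𝕜) = ‖⟪b i, x⟫_𝕜‖ ^ 2 := fun i ↦ by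
    rw [← inner_conj_symm x (b i), RCLike.conj_mul, ← RCLike.ofReal_pow, RCLike.ofReal_re]
  simpa only [RCLike.reCLM_apply, hterm, inner_self_eq_norm_sq] using h

theorem HilbertBasis.ofReal_norm_sq_eq_tsum {ι : Type*} (b : HilbertBasis ι 𝕜 E) (x : E) :
    ENNReal.ofReal (‖x‖ ^ 2) = ∑' i, ENNReal.ofReal (‖⟪b i, x⟫_𝕜‖ ^ 2) := by
  rw [← (b.hasSum_norm_inner_sq x).tsum_eq,
    ENNReal.ofReal_tsum_of_nonneg (fun _ ↦ by positivity) (b.hasSum_norm_inner_sq x).summable]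

variable [CompleteSpace E] [CompleteSpace F]

theorem tsum_ofReal_norm_adjoint_apply_sq_le {S ι : Type*} {v : S → F} (hv : Orthonormal 𝕜 v)
    (b : HilbertBasis ι 𝕜 E) (K : E →L[𝕜] F) :
    ∑' s, ENNReal.ofReal (‖adjoint K (v s)‖ ^ 2) ≤ ∑' i, ENNReal.ofReal (‖K (b i)‖ ^ 2) :=
  calc ∑' s, ENNReal.ofReal (‖adjoint K (v s)‖ ^ 2)
      = ∑' s, ∑' i, ENNReal.ofReal (‖⟪b i, adjoint K (v s)⟫_𝕜‖ ^ 2) := by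
        simp_rw [b.ofReal_norm_sq_eq_tsum]
    _ = ∑' i, ∑' s, ENNReal.ofReal (‖⟪v s, K (b i)⟫_𝕜‖ ^ 2) := by
        rw [ENNReal.tsum_comm]
        simp_rw [adjoint_inner_right, norm_inner_symm]
    _ ≤ ∑' i, ENNReal.ofReal (‖K (b i)‖ ^ 2) :=
        ENNReal.tsum_le_tsum fun i ↦ hv.tsum_ofReal_norm_inner_sq_le _

theorem re_inner_apply_projection_apply_self {T P : E →L[𝕜] E} (hT : IsSelfAdjoint T)
    (hP : IsSelfAdjoint P) (hPidem : IsIdempotentElem P) (x : E) :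
    RCLike.re ⟪T (P (T x)), x⟫_𝕜 = ‖P (T x)‖ ^ 2 := by
  rw [← comp_apply P T, apply_norm_sq_eq_inner_adjoint_left, adjoint_comp, hT.adjoint_eq,
    hP.adjoint_eq]
  simp only [comp_apply]
  rw [show P (P (T x)) = P (T x) from DFunLike.congr_fun hPidem.eq (T x)]

end InnerProductSpace

theorem MeasureTheory.Lp.isSelfAdjoint_of_ae_eq_indicator {α 𝕜 : Type*} [RCLike 𝕜]
    [MeasurableSpace α] {μ : Measure α} {A : Set α} {χ : Lp 𝕜 2 μ →L[𝕜] Lp 𝕜 2 μ}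
    (hχ : ∀ g : Lp 𝕜 2 μ, χ g =ᵐ[μ] A.indicator g) : IsSelfAdjoint χ := by
  refine isSelfAdjoint_iff_isSymmetric.mpr fun f g ↦ ?_
  simp only [coe_coe, L2.inner_def]
  refine integral_congr_ae ?_
  filter_upwards [hχ f, hχ g] with a hf hg
  by_cases ha : a ∈ A <;> simp [hf, hg, ha]

theorem card_le_trace_bound_general (n : ℕ)
    {S : Type*}
    (Φ : S → Lp ℂ 2 (volume : Measure (Fin n → ℝ))) (hΦ : Orthonormal ℂ Φ)
    (P : Lp ℂ 2 (volume : Measure (Fin n → ℝ)) →L[ℂ] Lp ℂ 2 (volume : Measure (Fin n → ℝ)))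
    (hPsa : IsSelfAdjoint P) (hPidem : P.comp P = P)
    (hPΦ : ∀ s : S, P (Φ s) = Φ s)
    (A : Set (Fin n → ℝ))
    (χ : Lp ℂ 2 (volume : Measure (Fin n → ℝ)) →L[ℂ] Lp ℂ 2 (volume : Measure (Fin n → ℝ)))
    (hχ : ∀ g : Lp ℂ 2 (volume : Measure (Fin n → ℝ)),
      (χ g : (Fin n → ℝ) → ℂ) =ᵐ[volume] A.indicator (g : (Fin n → ℝ) → ℂ))
    (hout : ∀ s : S, ‖Φ s - χ (Φ s)‖ ≤ 1 / 4)
    {ι : Type*} (e : HilbertBasis ι ℂ (Lp ℂ 2 (volume : Measure (Fin n → ℝ)))) :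
    (ENat.card S : ℝ≥0∞)
      ≤ 2 * ∑' i : ι, ENNReal.ofReal ((inner ℂ (χ (P (χ (e i)))) (e i) : ℂ).re) := by
  have hχsa := Lp.isSelfAdjoint_of_ae_eq_indicator hχ
  have hadj : ∀ s, adjoint (P ∘L χ) (Φ s) = χ (Φ s) := fun s ↦ by
    rw [adjoint_comp, hχsa.adjoint_eq, hPsa.adjoint_eq, comp_apply, hPΦ]
  have hone : ∀ s, (1 : ℝ≥0∞) ≤ 2 * ENNReal.ofReal (‖χ (Φ s)‖ ^ 2) := fun s ↦ by
    simpa [ENNReal.ofReal_mul] using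
      ENNReal.ofReal_le_ofReal (one_le_two_mul_norm_sq_of_norm_sub_le (hΦ.1 s) (hout s))
  calc (ENat.card S : ℝ≥0∞)
      = ∑' _ : S, 1 := ENNReal.tsum_one.symm
    _ ≤ 2 * ∑' s, ENNReal.ofReal (‖adjoint (P ∘L χ) (Φ s)‖ ^ 2) := by
        rw [← ENNReal.tsum_mul_left]
        exact ENNReal.tsum_le_tsum fun s ↦ (hadj s).symm ▸ hone s
    _ ≤ 2 * ∑' i, ENNReal.ofReal (‖P (χ (e i))‖ ^ 2) :=
        mul_le_mul_right (tsum_ofReal_norm_adjoint_apply_sq_le hΦ e (P ∘L χ)) 2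
    _ = _ := by
        simp_rw [← re_inner_apply_projection_apply_self hχsa hPsa hPidem]
        rfl

/-- If `(Φ_n)_{n∈S}` is a countable orthonormal family in `L²(ℝⁿ)`, `P` is the
orthogonal projection onto its closed span (so `P Φ_n = Φ_n`), `χ` is multiplication
by the indicator of a measurable set `A`, and `‖(1 − χ)Φ_n‖ ≤ 1/4` for all `n`,
then `card S ≤ 2 ∑_i ⟨χ P χ e_i, e_i⟩` for any Hilbert basis `(e_i)` of `L²(ℝⁿ)`. -/
theorem card_le_trace_bound (n : ℕ) (hn : 1 ≤ n)
    {S : Type*} [Countable S]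
    (Φ : S → Lp ℂ 2 (volume : Measure (Fin n → ℝ))) (hΦ : Orthonormal ℂ Φ)
    (P : Lp ℂ 2 (volume : Measure (Fin n → ℝ)) →L[ℂ] Lp ℂ 2 (volume : Measure (Fin n → ℝ)))
    (hPsa : IsSelfAdjoint P) (hPidem : P.comp P = P)
    (hPrange : LinearMap.range (P : Lp ℂ 2 (volume : Measure (Fin n → ℝ)) →ₗ[ℂ]
        Lp ℂ 2 (volume : Measure (Fin n → ℝ)))
      = (Submodule.span ℂ (Set.range Φ)).topologicalClosure)
    (hPΦ : ∀ s : S, P (Φ s) = Φ s)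
    (A : Set (Fin n → ℝ)) (hA : MeasurableSet A)
    (χ : Lp ℂ 2 (volume : Measure (Fin n → ℝ)) →L[ℂ] Lp ℂ 2 (volume : Measure (Fin n → ℝ)))
    (hχ : ∀ g : Lp ℂ 2 (volume : Measure (Fin n → ℝ)),
      (χ g : (Fin n → ℝ) → ℂ) =ᵐ[volume] A.indicator (g : (Fin n → ℝ) → ℂ))
    (hout : ∀ s : S, ‖Φ s - χ (Φ s)‖ ≤ 1 / 4)
    {ι : Type*} (e : HilbertBasis ι ℂ (Lp ℂ 2 (volume : Measure (Fin n → ℝ)))) :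
    (ENat.card S : ℝ≥0∞)
      ≤ 2 * ∑' i : ι, ENNReal.ofReal ((inner ℂ (χ (P (χ (e i)))) (e i) : ℂ).re) :=
  card_le_trace_bound_general n Φ hΦ P hPsa hPidem hPΦ A χ hχ hout e
end
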